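/- For the BiSample mechanism with input v ∈ [−1,1], all four output probabilities lie in the interval [1/(2(e^ε+1)), e^ε/(2(e^ε+1))], and the ratio of the maximum to the minimum possible output probability over all inputs is exactly e^ε. -/
import Mathlib


open Real

noncomputable def biSampleProb (ε v : ℝ) : Bool × Bool → ℝ
  | (s, b) =>
    let g := if s then (exp ε - 1) / (exp ε + 1) * (v / 2) + 1 / 2
             else (1 - exp ε) / (1 + exp ε) * (v / 2) + 1 / 2
    1 / 2 * (if b then g else 1 - g)

/-- For any input `v ∈ [−1,1]`, every BiSample output probability lies in
`[1/(2(e^ε+1)), e^ε/(2(e^ε+1))]`, and the ratio of the maximal to the minimal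
possible output probability is exactly `e^ε`. -/
theorem biSample_prob_bounds (ε : ℝ) (hε : 0 < ε) :
    (∀ v ∈ Set.Icc (-1 : ℝ) 1, ∀ o : Bool × Bool,
        biSampleProb ε v o ∈
          Set.Icc (1 / (2 * (exp ε + 1))) (exp ε / (2 * (exp ε + 1)))) ∧
    (exp ε / (2 * (exp ε + 1))) / (1 / (2 * (exp ε + 1))) = exp ε := by
  have hE : 1 < exp ε := by
    have := Real.exp_lt_exp.mpr hε
    simpa using this
  have h1 : (0:ℝ) < exp ε + 1 := by linarith
  have h2 : (0:ℝ) < 1 + exp ε := by linarith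
  have hd : (exp ε - 1) / (exp ε + 1) * (exp ε + 1) = exp ε - 1 :=
    div_mul_cancel₀ _ (ne_of_gt h1)
  have hd' : (1 - exp ε) / (1 + exp ε) * (1 + exp ε) = 1 - exp ε :=
    div_mul_cancel₀ _ (ne_of_gt h2)
  have hd0 : 0 ≤ (exp ε - 1) / (exp ε + 1) := div_nonneg (by linarith) (by linarith)
  have hd0' : 0 ≤ -((1 - exp ε) / (1 + exp ε)) := by
    rw [← neg_div]
    exact div_nonneg (by linarith) (by linarith)
  constructor
  · rintro v ⟨hv1, hv2⟩ ⟨s, b⟩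
    simp only [biSampleProb, Set.mem_Icc]
    cases s <;> cases b <;>
      simp only [if_true, if_false, Bool.false_eq_true, Bool.true_eq_false, ite_true,
        ite_false] <;>
      constructor <;>
      [rw [div_le_iff₀ (by positivity)]; rw [le_div_iff₀ (by positivity)];
       rw [div_le_iff₀ (by positivity)]; rw [le_div_iff₀ (by positivity)];
       rw [div_le_iff₀ (by positivity)]; rw [le_div_iff₀ (by positivity)];
       rw [div_le_iff₀ (by positivity)]; rw [le_div_iff₀ (by positivity)]] <;>
      nlinarith [hd, hd', mul_nonneg hd0 (by linarith : (0:ℝ) ≤ v + 1),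
        mul_nonneg hd0 (by linarith : (0:ℝ) ≤ 1 - v),
        mul_nonneg hd0' (by linarith : (0:ℝ) ≤ v + 1),
        mul_nonneg hd0' (by linarith : (0:ℝ) ≤ 1 - v), h1, h2]
  · field_simp
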